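/- For every multiple-access channel W on finite alphabets, the independent non-signaling assisted capacity region equals the independent non-signaling assisted sum-capacity region: C^{NS_SR}(W) = C_sum^{NS_SR}(W). -/

import Mathlib

open Finset Filter Topology

section Defs

variable {X1 X2 Y : Type*}

/-- The `n`-fold memoryless extension `W^{⊗n}` of a multiple-access channel `W`. -/
def macPow (n : ℕ) (W : X1 → X2 → Y → ℝ) :
    (Fin n → X1) → (Fin n → X2) → (Fin n → Y) → ℝ :=
  fun x1 x2 y => ∏ i, W (x1 i) (x2 i) (y i)

/-- A bipartite non-signaling box `P(x,j|i,y)` between one sender and the receiver,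
with `k` messages.  Arguments of `P` are in the order `x j i y`. -/
def IsNSBox1 {X Y : Type*} [Fintype X] [Fintype Y] (k : ℕ)
    (P : X → Fin k → Fin k → Y → ℝ) : Prop :=
  (∀ x j i y, 0 ≤ P x j i y) ∧
  (∀ i y, ∑ x, ∑ j, P x j i y = 1) ∧
  (∀ j i i' y, ∑ x, P x j i y = ∑ x, P x j i' y) ∧
  (∀ x i y y', ∑ j, P x j i y = ∑ j, P x j i y')

/-- `S^{NS_SR}(W,k1,k2)`: maximum joint success probability with independent
non-signaling assistance between each sender and the receiver. -/
noncomputable def SNSsr [Fintype X1] [Fintype X2] [Fintype Y]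
    (W : X1 → X2 → Y → ℝ) (k1 k2 : ℕ) : ℝ :=
  sSup {s : ℝ | ∃ (P1 : X1 → Fin k1 → Fin k1 → Y → ℝ) (P2 : X2 → Fin k2 → Fin k2 → Y → ℝ),
    IsNSBox1 k1 P1 ∧ IsNSBox1 k2 P2 ∧
    s = (1 / ((k1 : ℝ) * (k2 : ℝ))) * ∑ i1, ∑ i2, ∑ x1, ∑ x2, ∑ y,
      W x1 x2 y * P1 x1 i1 i1 y * P2 x2 i2 i2 y}

/-- `S_sum^{NS_SR}(W,k1,k2)`: maximum sum (averaged individual) success probability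
with independent non-signaling assistance between each sender and the receiver. -/
noncomputable def SNSsrSum [Fintype X1] [Fintype X2] [Fintype Y]
    (W : X1 → X2 → Y → ℝ) (k1 k2 : ℕ) : ℝ :=
  sSup {s : ℝ | ∃ (P1 : X1 → Fin k1 → Fin k1 → Y → ℝ) (P2 : X2 → Fin k2 → Fin k2 → Y → ℝ),
    IsNSBox1 k1 P1 ∧ IsNSBox1 k2 P2 ∧
    s = (1 / (2 * (k1 : ℝ) * (k2 : ℝ))) * ∑ i1, ∑ i2, ∑ x1, ∑ x2, ∑ y,
      W x1 x2 y *
        (P1 x1 i1 i1 y * ∑ j2, P2 x2 j2 i2 y + P2 x2 i2 i2 y * ∑ j1, P1 x1 j1 i1 y)}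

/-- `⌈2^{R n}⌉`, the number of messages at rate `R` for blocklength `n`. -/
noncomputable def nMsg (R : ℝ) (n : ℕ) : ℕ := ⌈(2 : ℝ) ^ (R * (n : ℝ))⌉₊

/-- The independent non-signaling assisted capacity region `C^{NS_SR}(W)`. -/
noncomputable def capacityRegionNSsr [Fintype X1] [Fintype X2] [Fintype Y]
    (W : X1 → X2 → Y → ℝ) : Set (ℝ × ℝ) :=
  closure {p : ℝ × ℝ |
    Tendsto (fun n : ℕ => SNSsr (macPow n W) (nMsg p.1 n) (nMsg p.2 n)) atTop (𝓝 1)}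

/-- The independent non-signaling assisted sum-capacity region `C_sum^{NS_SR}(W)`. -/
noncomputable def sumCapacityRegionNSsr [Fintype X1] [Fintype X2] [Fintype Y]
    (W : X1 → X2 → Y → ℝ) : Set (ℝ × ℝ) :=
  closure {p : ℝ × ℝ |
    Tendsto (fun n : ℕ => SNSsrSum (macPow n W) (nMsg p.1 n) (nMsg p.2 n)) atTop (𝓝 1)}

end Defs

/-!
Fix a pair of non-signaling boxes and messages `i1`, `i2`.  Writing `a = P1(x1,i1|i1,y)` and
`s1 = ∑ j, P1(x1,j|i1,y)` (so `0 ≤ a ≤ s1`), and `b ≤ s2` likewise for the second sender, we have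
`2ab ≤ a s2 + b s1 ≤ s1 s2 + ab`, while non-signaling makes `s1`, `s2` independent of `y`, so that
`∑ W s1 s2 = 1`.  Averaging, the joint success probability `J` and the sum success probability
`S` of the pair satisfy `J ≤ S` and `2S ≤ 1 + J`.  These pass to the suprema, so for every
blocklength `S^{NS_SR} ≤ S_sum^{NS_SR} ≤ (1 + S^{NS_SR}) / 2`, and one tends to `1` exactly when
the other does: the two sets of achievable rate pairs coincide before taking closures.
-/

lemma tendsto_nhds_one_iff_of_le_of_two_mul_le {α : Type*} {l : Filter α} {f g : α → ℝ}
    (hfg : ∀ a, f a ≤ g a) (hgf : ∀ a, 2 * g a ≤ 1 + f a) :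
    Tendsto f l (𝓝 1) ↔ Tendsto g l (𝓝 1) := by
  constructor
  · intro hf
    have hupper : Tendsto (fun a => (1 + f a) / 2) l (𝓝 1) := by
      simpa [one_add_one_eq_two] using (hf.const_add 1).div_const 2
    exact tendsto_of_tendsto_of_tendsto_of_le_of_le hf hupper hfg fun a => by linarith [hgf a]
  · intro hg
    have hlower : Tendsto (fun a => 2 * g a - 1) l (𝓝 1) := by
      convert (hg.const_mul 2).sub_const 1 using 2; norm_num
    exact tendsto_of_tendsto_of_tendsto_of_le_of_le hlower hg (fun a => by linarith [hgf a]) hfg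

lemma Real.two_mul_iSup_le_one_add_iSup {ι : Type*} {f g : ι → ℝ} (hf : BddAbove (Set.range f))
    (hgf : ∀ i, 2 * g i ≤ 1 + f i) : 2 * ⨆ i, g i ≤ 1 + ⨆ i, f i := by
  cases isEmpty_or_nonempty ι
  · simp
  · have : ⨆ i, g i ≤ (1 + ⨆ i, f i) / 2 :=
      ciSup_le fun i => by linarith [hgf i, le_ciSup hf i]
    linarith

namespace IsNSBox1

variable {X Y : Type*} [Fintype X] [Fintype Y] {k : ℕ} {P : X → Fin k → Fin k → Y → ℝ}

lemma diag_le_sum (hP : IsNSBox1 k P) (x : X) (i : Fin k) (y : Y) :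
    P x i i y ≤ ∑ j, P x j i y :=
  single_le_sum (fun j _ => hP.1 x j i y) (mem_univ i)

end IsNSBox1

section Boxes

abbrev NSBoxPair (X1 X2 Y : Type*) [Fintype X1] [Fintype X2] [Fintype Y] (k1 k2 : ℕ) :=
  {P : (X1 → Fin k1 → Fin k1 → Y → ℝ) × (X2 → Fin k2 → Fin k2 → Y → ℝ) //
    IsNSBox1 k1 P.1 ∧ IsNSBox1 k2 P.2}

variable {X1 X2 Y : Type*} [Fintype X1] [Fintype X2] [Fintype Y] {k1 k2 : ℕ}

noncomputable def jointSuccess (W : X1 → X2 → Y → ℝ) (P1 : X1 → Fin k1 → Fin k1 → Y → ℝ)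
    (P2 : X2 → Fin k2 → Fin k2 → Y → ℝ) : ℝ :=
  (1 / ((k1 : ℝ) * (k2 : ℝ))) * ∑ i1, ∑ i2, ∑ x1, ∑ x2, ∑ y,
    W x1 x2 y * P1 x1 i1 i1 y * P2 x2 i2 i2 y

noncomputable def sumSuccess (W : X1 → X2 → Y → ℝ) (P1 : X1 → Fin k1 → Fin k1 → Y → ℝ)
    (P2 : X2 → Fin k2 → Fin k2 → Y → ℝ) : ℝ :=
  (1 / (2 * (k1 : ℝ) * (k2 : ℝ))) * ∑ i1, ∑ i2, ∑ x1, ∑ x2, ∑ y,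
    W x1 x2 y * (P1 x1 i1 i1 y * ∑ j2, P2 x2 j2 i2 y + P2 x2 i2 i2 y * ∑ j1, P1 x1 j1 i1 y)

lemma SNSsr_eq_iSup (W : X1 → X2 → Y → ℝ) (k1 k2 : ℕ) :
    SNSsr W k1 k2 = ⨆ P : NSBoxPair X1 X2 Y k1 k2, jointSuccess W P.1.1 P.1.2 := by
  rw [iSup, SNSsr]
  congr 1
  ext s
  constructor
  · rintro ⟨P1, P2, h1, h2, rfl⟩
    exact ⟨⟨(P1, P2), h1, h2⟩, rfl⟩
  · rintro ⟨⟨⟨P1, P2⟩, h1, h2⟩, rfl⟩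
    exact ⟨P1, P2, h1, h2, rfl⟩

lemma SNSsrSum_eq_iSup (W : X1 → X2 → Y → ℝ) (k1 k2 : ℕ) :
    SNSsrSum W k1 k2 = ⨆ P : NSBoxPair X1 X2 Y k1 k2, sumSuccess W P.1.1 P.1.2 := by
  rw [iSup, SNSsrSum]
  congr 1
  ext s
  constructor
  · rintro ⟨P1, P2, h1, h2, rfl⟩
    exact ⟨⟨(P1, P2), h1, h2⟩, rfl⟩
  · rintro ⟨⟨⟨P1, P2⟩, h1, h2⟩, rfl⟩
    exact ⟨P1, P2, h1, h2, rfl⟩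

variable {W : X1 → X2 → Y → ℝ} {P1 : X1 → Fin k1 → Fin k1 → Y → ℝ}
  {P2 : X2 → Fin k2 → Fin k2 → Y → ℝ}

lemma jointSuccess_le_sumSuccess (hW0 : ∀ x1 x2 y, 0 ≤ W x1 x2 y)
    (h1 : IsNSBox1 k1 P1) (h2 : IsNSBox1 k2 P2) :
    jointSuccess W P1 P2 ≤ sumSuccess W P1 P2 := by
  calc jointSuccess W P1 P2
      = (1 / (2 * (k1 : ℝ) * (k2 : ℝ))) * (2 * ∑ i1, ∑ i2, ∑ x1, ∑ x2, ∑ y,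
          W x1 x2 y * P1 x1 i1 i1 y * P2 x2 i2 i2 y) := by
        rw [jointSuccess]
        ring
    _ = (1 / (2 * (k1 : ℝ) * (k2 : ℝ))) * ∑ i1, ∑ i2, ∑ x1, ∑ x2, ∑ y,
          2 * (W x1 x2 y * P1 x1 i1 i1 y * P2 x2 i2 i2 y) := by
        simp only [mul_sum]
    _ ≤ sumSuccess W P1 P2 := by
        unfold sumSuccess
        gcongr _ * ∑ i1, ∑ i2, ∑ x1, ∑ x2, ∑ y, ?_ with i1 _ i2 _ x1 _ x2 _ y
        have : 2 * (P1 x1 i1 i1 y * P2 x2 i2 i2 y) ≤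
            P1 x1 i1 i1 y * ∑ j2, P2 x2 j2 i2 y + P2 x2 i2 i2 y * ∑ j1, P1 x1 j1 i1 y := by
          nlinarith [h1.1 x1 i1 i1 y, h2.1 x2 i2 i2 y, h1.diag_le_sum x1 i1 y,
            h2.diag_le_sum x2 i2 y]
        nlinarith [mul_le_mul_of_nonneg_left this (hW0 x1 x2 y)]

lemma sum_mul_marginal_mul_marginal_le_one (hW1 : ∀ x1 x2, ∑ y, W x1 x2 y = 1)
    (h1 : IsNSBox1 k1 P1) (h2 : IsNSBox1 k2 P2) (i1 : Fin k1) (i2 : Fin k2) :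
    ∑ x1, ∑ x2, ∑ y, W x1 x2 y * ((∑ j1, P1 x1 j1 i1 y) * ∑ j2, P2 x2 j2 i2 y) ≤ 1 := by
  rcases isEmpty_or_nonempty Y with _ | ⟨⟨y0⟩⟩
  · simp
  have hconst : ∀ x1 x2 y, W x1 x2 y * ((∑ j1, P1 x1 j1 i1 y) * ∑ j2, P2 x2 j2 i2 y) =
      (∑ j1, P1 x1 j1 i1 y0) * (∑ j2, P2 x2 j2 i2 y0) * W x1 x2 y := by
    intro x1 x2 y
    rw [h1.2.2.2 x1 i1 y y0, h2.2.2.2 x2 i2 y y0]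
    ring
  apply le_of_eq
  simp only [hconst, ← mul_sum, hW1, mul_one]
  rw [h2.2.1 i2 y0, ← sum_mul, h1.2.1 i1 y0, one_mul]

lemma two_mul_sumSuccess_le (hW0 : ∀ x1 x2 y, 0 ≤ W x1 x2 y)
    (hW1 : ∀ x1 x2, ∑ y, W x1 x2 y = 1) (h1 : IsNSBox1 k1 P1) (h2 : IsNSBox1 k2 P2) :
    2 * sumSuccess W P1 P2 ≤ 1 + jointSuccess W P1 P2 := by
  calc 2 * sumSuccess W P1 P2
      = (1 / ((k1 : ℝ) * (k2 : ℝ))) * ∑ i1, ∑ i2, ∑ x1, ∑ x2, ∑ y, W x1 x2 y *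
          (P1 x1 i1 i1 y * ∑ j2, P2 x2 j2 i2 y + P2 x2 i2 i2 y * ∑ j1, P1 x1 j1 i1 y) := by
        rw [sumSuccess]
        ring
    _ ≤ (1 / ((k1 : ℝ) * (k2 : ℝ))) * ∑ i1, ∑ i2, ∑ x1, ∑ x2, ∑ y,
          (W x1 x2 y * ((∑ j1, P1 x1 j1 i1 y) * ∑ j2, P2 x2 j2 i2 y) +
            W x1 x2 y * P1 x1 i1 i1 y * P2 x2 i2 i2 y) := by
        gcongr _ * ∑ i1, ∑ i2, ∑ x1, ∑ x2, ∑ y, ?_ with i1 _ i2 _ x1 _ x2 _ y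
        have : P1 x1 i1 i1 y * ∑ j2, P2 x2 j2 i2 y + P2 x2 i2 i2 y * ∑ j1, P1 x1 j1 i1 y ≤
            (∑ j1, P1 x1 j1 i1 y) * (∑ j2, P2 x2 j2 i2 y) + P1 x1 i1 i1 y * P2 x2 i2 i2 y := by
          nlinarith [mul_nonneg (sub_nonneg.2 (h1.diag_le_sum x1 i1 y))
            (sub_nonneg.2 (h2.diag_le_sum x2 i2 y))]
        nlinarith [mul_le_mul_of_nonneg_left this (hW0 x1 x2 y)]
    _ = (1 / ((k1 : ℝ) * (k2 : ℝ))) * ∑ i1, ∑ i2, ∑ x1, ∑ x2, ∑ y,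
          W x1 x2 y * ((∑ j1, P1 x1 j1 i1 y) * ∑ j2, P2 x2 j2 i2 y) + jointSuccess W P1 P2 := by
        simp only [sum_add_distrib, jointSuccess]
        ring
    _ ≤ (1 / ((k1 : ℝ) * (k2 : ℝ))) * ∑ _i1 : Fin k1, ∑ _i2 : Fin k2, 1 +
          jointSuccess W P1 P2 := by
        gcongr with i1 _ i2 _
        exact sum_mul_marginal_mul_marginal_le_one hW1 h1 h2 i1 i2
    _ ≤ 1 + jointSuccess W P1 P2 := by
        gcongr
        simp only [sum_const, card_univ, Fintype.card_fin, nsmul_eq_mul, mul_one,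
          one_div_mul_eq_div]
        exact div_self_le_one _

lemma sumSuccess_le_one (hW0 : ∀ x1 x2 y, 0 ≤ W x1 x2 y)
    (hW1 : ∀ x1 x2, ∑ y, W x1 x2 y = 1) (h1 : IsNSBox1 k1 P1) (h2 : IsNSBox1 k2 P2) :
    sumSuccess W P1 P2 ≤ 1 := by
  linarith [jointSuccess_le_sumSuccess hW0 h1 h2, two_mul_sumSuccess_le hW0 hW1 h1 h2]

variable (k1 k2)

lemma SNSsr_le_SNSsrSum (hW0 : ∀ x1 x2 y, 0 ≤ W x1 x2 y)
    (hW1 : ∀ x1 x2, ∑ y, W x1 x2 y = 1) : SNSsr W k1 k2 ≤ SNSsrSum W k1 k2 := by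
  rw [SNSsr_eq_iSup, SNSsrSum_eq_iSup]
  refine ciSup_mono ⟨1, ?_⟩ fun P => jointSuccess_le_sumSuccess hW0 P.2.1 P.2.2
  rintro _ ⟨P, rfl⟩
  exact sumSuccess_le_one hW0 hW1 P.2.1 P.2.2

lemma two_mul_SNSsrSum_le (hW0 : ∀ x1 x2 y, 0 ≤ W x1 x2 y)
    (hW1 : ∀ x1 x2, ∑ y, W x1 x2 y = 1) : 2 * SNSsrSum W k1 k2 ≤ 1 + SNSsr W k1 k2 := by
  rw [SNSsr_eq_iSup, SNSsrSum_eq_iSup]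
  refine Real.two_mul_iSup_le_one_add_iSup ⟨1, ?_⟩
    fun P => two_mul_sumSuccess_le hW0 hW1 P.2.1 P.2.2
  rintro _ ⟨P, rfl⟩
  exact (jointSuccess_le_sumSuccess hW0 P.2.1 P.2.2).trans (sumSuccess_le_one hW0 hW1 P.2.1 P.2.2)

end Boxes

section MacPow

variable {X1 X2 Y : Type*} {W : X1 → X2 → Y → ℝ}

lemma macPow_nonneg (hW0 : ∀ x1 x2 y, 0 ≤ W x1 x2 y) (n : ℕ) (x1 : Fin n → X1)
    (x2 : Fin n → X2) (y : Fin n → Y) : 0 ≤ macPow n W x1 x2 y :=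
  prod_nonneg fun i _ => hW0 (x1 i) (x2 i) (y i)

lemma sum_macPow [Fintype Y] (hW1 : ∀ x1 x2, ∑ y, W x1 x2 y = 1) (n : ℕ) (x1 : Fin n → X1)
    (x2 : Fin n → X2) : ∑ y, macPow n W x1 x2 y = 1 := by
  simp only [macPow]
  rw [← Fintype.prod_sum (fun i y => W (x1 i) (x2 i) y)]
  simp [hW1]

end MacPow

/-- For every MAC `W` on finite alphabets, the independent non-signaling assisted
capacity region equals the independent non-signaling assisted sum-capacity region:
`C^{NS_SR}(W) = C_sum^{NS_SR}(W)`. -/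
theorem capacityRegionNSsr_eq_sumCapacityRegionNSsr {X1 X2 Y : Type*}
    [Fintype X1] [Fintype X2] [Fintype Y]
    (W : X1 → X2 → Y → ℝ)
    (hW0 : ∀ x1 x2 y, 0 ≤ W x1 x2 y)
    (hW1 : ∀ x1 x2, ∑ y, W x1 x2 y = 1) :
    capacityRegionNSsr W = sumCapacityRegionNSsr W := by
  unfold capacityRegionNSsr sumCapacityRegionNSsr
  congr 1
  ext p
  exact tendsto_nhds_one_iff_of_le_of_two_mul_le
    (fun n => SNSsr_le_SNSsrSum _ _ (macPow_nonneg hW0 n) (sum_macPow hW1 n))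
    (fun n => two_mul_SNSsrSum_le _ _ (macPow_nonneg hW0 n) (sum_macPow hW1 n))
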